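/- A pair (X,Y) ∈ C⁻_λ satisfies the Lyapunov–Perron fixed point equations X(t) = exp(tA)X₀ + ∫_0^t exp((t−s)A) F(X(s),Y(s),s) ds and Y(t) = (1/ε) ∫_{−∞}^t exp((t−s)B/ε) G(X(s),Y(s),s) ds for all t ≤ 0 if and only if X(0) = X₀, the pair (X,Y) is continuously differentiable on (−∞,0], and X′(t) = A X(t) + F(X(t),Y(t),t) and Y′(t) = (1/ε) B Y(t) + (1/ε) G(X(t),Y(t),t) hold for all t ≤ 0. -/

import Mathlib

/-!
Conjugating by the flow turns the equations into statements about primitives: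
`z t = exp (-t A) x t` has derivative `exp (-t A) f t` exactly when `x' = A x + f`. Hence the slow
equation is the fundamental theorem of calculus for `z` on `[t, 0]`, and the fast one, for the
generator `B / ε`, is its improper version on `(-∞, t]`. The latter applies because `β < ε λ`:
for `u ∈ C⁻_λ` both `exp (-s B / ε) G (u s) s` and `exp (-t B / ε) Y t` are
`O(exp ((λ - β / ε) t))`, so the first is integrable on `(-∞, 0]` and the second tends to `0`
at `-∞`.
-/

open MeasureTheory Set

noncomputable section

/-- `ℝᵏ` with the Euclidean norm. -/
abbrev Euc (k : ℕ) := EuclideanSpace ℝ (Fin k)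

/-- The operator exponential `exp (t • A)` of a linear operator (matrix) `A` on `ℝᵏ`. -/
def expOp {k : ℕ} (A : Euc k →L[ℝ] Euc k) (t : ℝ) : Euc k →L[ℝ] Euc k :=
  NormedSpace.exp (t • A)

/-- Membership in the space `C⁻_ρ`: continuity on `(-∞,0]` together with finiteness of the
weighted sup norm `sup_{t ≤ 0} e^{-ρ t} ‖u t‖`. -/
def memCm (ρ : ℝ) {E : Type*} [NormedAddCommGroup E] (u : ℝ → E) : Prop :=
  ContinuousOn u (Set.Iic 0) ∧ ∃ C : ℝ, ∀ t ≤ (0:ℝ), Real.exp (-ρ * t) * ‖u t‖ ≤ C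

/-- The weighted sup norm `‖u‖_ρ = sup_{t ≤ 0} e^{-ρ t} ‖u t‖` on `C⁻_ρ`. -/
def nrm (ρ : ℝ) {E : Type*} [NormedAddCommGroup E] (u : ℝ → E) : ℝ :=
  ⨆ t : Set.Iic (0:ℝ), Real.exp (-ρ * (t : ℝ)) * ‖u t‖

open Filter Topology

section Semigroup

variable {k : ℕ} (A : Euc k →L[ℝ] Euc k)

lemma expOp_zero : expOp A 0 = 1 :=
  (congrArg NormedSpace.exp (zero_smul ℝ A)).trans NormedSpace.exp_zero

lemma expOp_add (s t : ℝ) : expOp A (s + t) = expOp A s * expOp A t := by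
  have hball (x : Euc k →L[ℝ] Euc k) :
      x ∈ Metric.eball 0 (NormedSpace.expSeries ℝ (Euc k →L[ℝ] Euc k)).radius :=
    (NormedSpace.expSeries_radius_eq_top ℝ (Euc k →L[ℝ] Euc k)).symm ▸ edist_lt_top _ _
  rw [expOp, expOp, expOp, show (s + t) • A = s • A + t • A from add_smul s t A]
  have hcomm : Commute (s • A) (t • A) := by
    ext x
    simp only [mul_apply_eq_comp, smul_apply, map_smul, smul_comm s t]
  exact NormedSpace.exp_add_of_commute_of_mem_ball hcomm (hball _) (hball _)

lemma expOp_sub_apply (t s : ℝ) (v : Euc k) :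
    expOp A (t - s) v = expOp A t (expOp A (-s) v) := by
  rw [sub_eq_add_neg, expOp_add, mul_apply_eq_comp]

lemma expOp_apply_expOp_neg_apply (t : ℝ) (v : Euc k) : expOp A t (expOp A (-t) v) = v := by
  rw [← expOp_sub_apply, sub_self, expOp_zero, one_apply_eq_self]

lemma expOp_neg_apply_eq_iff {t : ℝ} {v w : Euc k} : expOp A (-t) v = w ↔ v = expOp A t w := by
  constructor
  · rintro rfl
    exact (expOp_apply_expOp_neg_apply A t v).symm
  · rintro rfl
    simpa using expOp_apply_expOp_neg_apply A (-t) w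

lemma expOp_div (c t : ℝ) : expOp A (t / c) = expOp (c⁻¹ • A) t := by
  rw [expOp, expOp, smul_smul, div_eq_mul_inv]

lemma hasDerivAt_expOp (t : ℝ) : HasDerivAt (expOp A) (A * expOp A t) t :=
  hasDerivAt_exp_smul_const' A t

lemma expOp_apply_comm (t : ℝ) (v : Euc k) : expOp A t (A v) = A (expOp A t v) :=
  congrArg (· v) ((hasDerivAt_exp_smul_const A t).unique (hasDerivAt_exp_smul_const' A t))

lemma continuousOn_expOp_neg_apply {g : ℝ → Euc k} {S : Set ℝ} (hg : ContinuousOn g S) :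
    ContinuousOn (fun s => expOp A (-s) (g s)) S :=
  ((continuous_iff_continuousAt.2 fun t => (hasDerivAt_expOp A t).continuousAt).comp
    continuous_neg).continuousOn.clm_apply hg

end Semigroup

lemma ContinuousOn.intervalIntegrable_of_Iic {E : Type*} [NormedAddCommGroup E] {φ : ℝ → E}
    {a b c : ℝ} (hφ : ContinuousOn φ (Iic c)) (ha : a ≤ c) (hb : b ≤ c) :
    IntervalIntegrable φ volume a b :=
  (hφ.mono fun _ hx => le_trans hx.2 (max_le ha hb)).intervalIntegrable

section Calculus

variable {E : Type*} [NormedAddCommGroup E] [NormedSpace ℝ E] [CompleteSpace E]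

lemma hasDerivWithinAt_intervalIntegral_Iic {φ : ℝ → E} {a t : ℝ}
    (hφ : ContinuousOn φ (Iic a)) (ht : t ≤ a) :
    HasDerivWithinAt (fun s => ∫ x in a..s, φ x) (φ t) (Iic a) t := by
  have hint := hφ.intervalIntegrable_of_Iic le_rfl ht
  rcases ht.lt_or_eq with ht | rfl
  · have hcont : ContinuousAt φ t := (hφ t ht.le).continuousAt (Iic_mem_nhds ht)
    have hmeas := (hφ.mono Iio_subset_Iic_self).stronglyMeasurableAtFilter (μ := volume)
      isOpen_Iio t ht
    exact (intervalIntegral.integral_hasDerivAt_right hint hmeas hcont).hasDerivWithinAt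
  · exact intervalIntegral.integral_hasDerivWithinAt_right hint
      (hφ.stronglyMeasurableAtFilter_nhdsWithin measurableSet_Iic t) (hφ t self_mem_Iic)

lemma eq_add_intervalIntegral_iff {z φ : ℝ → E} {a : ℝ} (hφ : ContinuousOn φ (Iic a)) (c : E) :
    (∀ t ≤ a, z t = c + ∫ s in a..t, φ s) ↔
      z a = c ∧ ∀ t ≤ a, HasDerivWithinAt z (φ t) (Iic a) t := by
  constructor
  · intro hz
    refine ⟨by simpa using hz a le_rfl, fun t ht => ?_⟩
    exact ((hasDerivWithinAt_intervalIntegral_Iic hφ ht).const_add c).congr hz (hz t ht)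
  · rintro ⟨rfl, hz⟩ t ht
    have hcont : ContinuousOn z (Icc t a) := fun x hx => (hz x hx.2).continuousWithinAt.mono
      Icc_subset_Iic_self
    have hderiv (x : ℝ) (hx : x ∈ Ioo t a) : HasDerivWithinAt z (φ x) (Ioi x) x :=
      ((hz x hx.2.le).hasDerivAt (Iic_mem_nhds hx.2)).hasDerivWithinAt
    rw [intervalIntegral.integral_symm, intervalIntegral.integral_eq_sub_of_hasDeriv_right_of_le ht
      hcont hderiv (hφ.intervalIntegrable_of_Iic ht le_rfl)]
    abel

lemma eq_integral_Iic_iff {z φ : ℝ → E} {a : ℝ} (hφ : ContinuousOn φ (Iic a))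
    (hφi : IntegrableOn φ (Iic a)) (hz : Tendsto z atBot (𝓝 0)) :
    (∀ t ≤ a, z t = ∫ s in Iic t, φ s) ↔ ∀ t ≤ a, HasDerivWithinAt z (φ t) (Iic a) t := by
  constructor
  · intro h
    refine ((eq_add_intervalIntegral_iff hφ (∫ s in Iic a, φ s)).1 fun t ht => ?_).2
    rw [h t ht, ← intervalIntegral.integral_Iic_sub_Iic hφi (hφi.mono_set (Iic_subset_Iic.2 ht)),
      add_sub_cancel]
  · intro h t ht
    rw [integral_Iic_of_hasDerivAt_of_tendsto
      ((h t ht).continuousWithinAt.mono (Iic_subset_Iic.2 ht))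
      (fun x hx => (h x (hx.out.le.trans ht)).hasDerivAt (Iic_mem_nhds (hx.out.trans_le ht)))
      (hφi.mono_set (Iic_subset_Iic.2 ht)) hz, sub_zero]

end Calculus

section Duhamel

variable {k : ℕ} (A : Euc k →L[ℝ] Euc k)

lemma hasDerivWithinAt_expOp_neg_apply_iff {x : ℝ → Euc k} {y : Euc k} {S : Set ℝ} {t : ℝ} :
    HasDerivWithinAt (fun τ => expOp A (-τ) (x τ)) (expOp A (-t) y) S t ↔
      HasDerivWithinAt x (A (x t) + y) S t := by
  constructor
  · intro h
    have hD := ((hasDerivAt_expOp A t).hasDerivWithinAt (s := S)).clm_apply h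
    simpa only [mul_apply_eq_comp, expOp_apply_expOp_neg_apply] using hD
  · intro h
    have hexp : HasDerivAt (fun τ => expOp A (-τ)) ((-1 : ℝ) • (A * expOp A (-t))) t :=
      (hasDerivAt_expOp A (-t)).scomp t (hasDerivAt_neg t)
    refine ((hexp.hasDerivWithinAt (s := S)).clm_apply h).congr_deriv ?_
    rw [smul_apply, mul_apply_eq_comp, map_add, expOp_apply_comm, neg_one_smul]
    abel

lemma eq_expOp_add_integral_iff {x f : ℝ → Euc k} (hf : ContinuousOn f (Iic 0)) (x₀ : Euc k) :
    (∀ t ≤ 0, x t = expOp A t x₀ + ∫ s in 0..t, expOp A (t - s) (f s)) ↔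
      x 0 = x₀ ∧ ∀ t ≤ 0, HasDerivWithinAt x (A (x t) + f t) (Iic 0) t := by
  have hφ := continuousOn_expOp_neg_apply A hf
  have hconj (t : ℝ) (ht : t ≤ 0) :
      (x t = expOp A t x₀ + ∫ s in 0..t, expOp A (t - s) (f s)) ↔
        expOp A (-t) (x t) = x₀ + ∫ s in 0..t, expOp A (-s) (f s) := by
    simp_rw [expOp_sub_apply A t]
    rw [ContinuousLinearMap.intervalIntegral_comp_comm _ (hφ.intervalIntegrable_of_Iic le_rfl ht),
      ← map_add, expOp_neg_apply_eq_iff]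
  rw [forall₂_congr hconj, eq_add_intervalIntegral_iff hφ]
  simp only [neg_zero, expOp_zero, one_apply_eq_self, hasDerivWithinAt_expOp_neg_apply_iff]

lemma eq_integral_Iic_expOp_iff {y g : ℝ → Euc k} (hg : ContinuousOn g (Iic 0))
    (hgi : IntegrableOn (fun s => expOp A (-s) (g s)) (Iic 0))
    (hy : Tendsto (fun t => expOp A (-t) (y t)) atBot (𝓝 0)) :
    (∀ t ≤ 0, y t = ∫ s in Iic t, expOp A (t - s) (g s)) ↔
      ∀ t ≤ 0, HasDerivWithinAt y (A (y t) + g t) (Iic 0) t := by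
  have hconj (t : ℝ) (ht : t ≤ 0) :
      (y t = ∫ s in Iic t, expOp A (t - s) (g s)) ↔
        expOp A (-t) (y t) = ∫ s in Iic t, expOp A (-s) (g s) := by
    simp_rw [expOp_sub_apply A t]
    rw [ContinuousLinearMap.integral_comp_comm _ (hgi.mono_set (Iic_subset_Iic.2 ht)),
      expOp_neg_apply_eq_iff]
  rw [forall₂_congr hconj, eq_integral_Iic_iff (continuousOn_expOp_neg_apply A hg) hgi hy]
  simp only [hasDerivWithinAt_expOp_neg_apply_iff]

end Duhamel

section Decay

variable {E : Type*} [NormedAddCommGroup E]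

lemma le_mul_exp_of_exp_neg_mul_le {ρ t v C : ℝ} (h : Real.exp (-ρ * t) * v ≤ C) :
    v ≤ C * Real.exp (ρ * t) := by
  rwa [neg_mul, Real.exp_neg, inv_mul_le_iff₀ (Real.exp_pos _), mul_comm] at h

lemma memCm.exists_norm_le {ρ : ℝ} {u : ℝ → E} (hu : memCm ρ u) :
    ∃ C, ∀ t ≤ 0, ‖u t‖ ≤ C * Real.exp (ρ * t) :=
  hu.2.imp fun _ hC t ht => le_mul_exp_of_exp_neg_mul_le (hC t ht)

lemma LipschitzWith.norm_le_mul_norm_add {F : Type*} [NormedAddCommGroup F] {f : E → F}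
    {K : NNReal} (hf : LipschitzWith K f) (x : E) : ‖f x‖ ≤ K * ‖x‖ + ‖f 0‖ := by
  have := hf.norm_sub_le x 0
  rw [sub_zero] at this
  linarith [norm_le_norm_add_norm_sub' (f x) (f 0)]

lemma norm_apply_le_exp_of_lipschitzWith {F : Type*} [NormedAddCommGroup F] {G : E → ℝ → F}
    {K : NNReal} (hG : ∀ t, LipschitzWith K fun x => G x t) {u : ℝ → E} {ρ C C₀ : ℝ}
    (hu : ∀ t ≤ 0, ‖u t‖ ≤ C * Real.exp (ρ * t)) (hG₀ : ∀ t ≤ 0, ‖G 0 t‖ ≤ C₀ * Real.exp (ρ * t))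
    (t : ℝ) (ht : t ≤ 0) : ‖G (u t) t‖ ≤ (K * C + C₀) * Real.exp (ρ * t) :=
  calc ‖G (u t) t‖ ≤ K * ‖u t‖ + ‖G 0 t‖ := (hG t).norm_le_mul_norm_add (u t)
    _ ≤ K * (C * Real.exp (ρ * t)) + C₀ * Real.exp (ρ * t) := by
        gcongr
        exacts [hu t ht, hG₀ t ht]
    _ = (K * C + C₀) * Real.exp (ρ * t) := by ring

lemma tendsto_atBot_zero_of_norm_le_exp {w : ℝ → E} {a C δ : ℝ} (hδ : 0 < δ)
    (h : ∀ t ≤ a, ‖w t‖ ≤ C * Real.exp (δ * t)) : Tendsto w atBot (𝓝 0) := by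
  refine squeeze_zero_norm' (eventually_atBot.2 ⟨a, h⟩) ?_
  simpa using (Real.tendsto_exp_atBot.comp (tendsto_id.const_mul_atBot hδ)).const_mul C

lemma integrableOn_Iic_of_norm_le_exp {φ : ℝ → E} {a C δ : ℝ} (hδ : 0 < δ)
    (hφ : ContinuousOn φ (Iic a)) (h : ∀ t ≤ a, ‖φ t‖ ≤ C * Real.exp (δ * t)) :
    IntegrableOn φ (Iic a) :=
  Integrable.mono' ((integrableOn_exp_mul_Iic hδ a).const_mul C)
    (hφ.aestronglyMeasurable measurableSet_Iic)
    (by filter_upwards [ae_restrict_mem measurableSet_Iic] with t ht using h t ht)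

lemma norm_expOp_neg_apply_le {k : ℕ} {A : Euc k →L[ℝ] Euc k} {β C ρ : ℝ}
    (hA : ∀ t ≥ 0, ∀ y, ‖expOp A t y‖ ≤ Real.exp (β * t) * ‖y‖) {v : ℝ → Euc k}
    (hv : ∀ t ≤ 0, ‖v t‖ ≤ C * Real.exp (ρ * t)) (t : ℝ) (ht : t ≤ 0) :
    ‖expOp A (-t) (v t)‖ ≤ C * Real.exp ((ρ - β) * t) :=
  calc ‖expOp A (-t) (v t)‖ ≤ Real.exp (β * -t) * (C * Real.exp (ρ * t)) :=
        (hA (-t) (neg_nonneg.2 ht) _).trans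
          (mul_le_mul_of_nonneg_left (hv t ht) (Real.exp_pos _).le)
    _ = C * Real.exp ((ρ - β) * t) := by
        rw [mul_left_comm, ← Real.exp_add]; ring_nf

lemma norm_expOp_inv_smul_apply_le {k : ℕ} {A : Euc k →L[ℝ] Euc k} {β c : ℝ}
    (hA : ∀ t ≥ 0, ∀ y, ‖expOp A t y‖ ≤ Real.exp (β * t) * ‖y‖) (hc : 0 < c) (t : ℝ)
    (ht : 0 ≤ t) (y : Euc k) : ‖expOp (c⁻¹ • A) t y‖ ≤ Real.exp (β / c * t) * ‖y‖ := by
  simpa only [← expOp_div, div_mul_eq_mul_div, mul_div_assoc] using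
    hA (t / c) (div_nonneg ht hc.le) y

end Decay

theorem lyapunovPerron_fixedPoint_iff_solution_general
    {n m : ℕ} (A : Euc n →L[ℝ] Euc n) (B : Euc m →L[ℝ] Euc m)
    (β : ℝ)
    (hB : ∀ t ≥ (0:ℝ), ∀ y : Euc m, ‖expOp B t y‖ ≤ Real.exp (β * t) * ‖y‖)
    (F : Euc n → Euc m → ℝ → Euc n) (G : Euc n → Euc m → ℝ → Euc m)
    (Lg : NNReal)
    (hFc : Continuous fun p : Euc n × Euc m × ℝ => F p.1 p.2.1 p.2.2)
    (hGc : Continuous fun p : Euc n × Euc m × ℝ => G p.1 p.2.1 p.2.2)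
    (hGl : ∀ t : ℝ, LipschitzWith Lg fun p : Euc n × Euc m => G p.1 p.2 t)
    (ε lam : ℝ) (hε : 0 < ε)
    (hlam1 : β < ε * lam)
    (hFG0 : ∃ C : ℝ, ∀ t ≤ (0:ℝ),
      Real.exp (-lam * t) * (‖F 0 0 t‖ + ‖G 0 0 t‖) ≤ C)
    (X₀ : Euc n) (u : ℝ → Euc n × Euc m) (hu : memCm lam u) :
    (∀ t ≤ (0:ℝ),
        (u t).1 = expOp A t X₀ + ∫ s in (0:ℝ)..t, expOp A (t - s) (F (u s).1 (u s).2 s) ∧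
        (u t).2 = (1 / ε) • ∫ s in Set.Iic t, expOp B ((t - s) / ε) (G (u s).1 (u s).2 s)) ↔
      ((u 0).1 = X₀ ∧
        ∀ t ≤ (0:ℝ),
          HasDerivWithinAt (fun s => (u s).1)
            (A (u t).1 + F (u t).1 (u t).2 t) (Set.Iic 0) t ∧
          HasDerivWithinAt (fun s => (u s).2)
            ((1 / ε) • B (u t).2 + (1 / ε) • G (u t).1 (u t).2 t) (Set.Iic 0) t) := by
  obtain ⟨Cu, hCu⟩ := hu.exists_norm_le
  obtain ⟨C₀, hC₀⟩ := hFG0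
  have hG₀ (t : ℝ) (ht : t ≤ 0) : ‖G 0 0 t‖ ≤ C₀ * Real.exp (lam * t) :=
    le_mul_exp_of_exp_neg_mul_le <| (mul_le_mul_of_nonneg_left
      (le_add_of_nonneg_left (norm_nonneg _)) (Real.exp_pos _).le).trans (hC₀ t ht)
  have hGu : ∀ t ≤ 0, ‖G (u t).1 (u t).2 t‖ ≤ ((Lg : ℝ) * Cu + C₀) * Real.exp (lam * t) :=
    norm_apply_le_exp_of_lipschitzWith (E := Euc n × Euc m) (G := fun p t => G p.1 p.2 t) hGl hCu
      fun t ht => by simpa only [Prod.fst_zero, Prod.snd_zero] using hG₀ t ht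
  have hB' := norm_expOp_inv_smul_apply_le hB hε
  have hδ : 0 < lam - β / ε := by rw [sub_pos, div_lt_iff₀ hε]; linarith
  have hcurve : ContinuousOn (fun s => ((u s).1, (u s).2, s)) (Iic 0) :=
    hu.1.fst.prodMk (hu.1.snd.prodMk continuousOn_id)
  have hf : ContinuousOn (fun s => F (u s).1 (u s).2 s) (Iic 0) := hFc.comp_continuousOn hcurve
  have hg : ContinuousOn (fun s => (1 / ε) • G (u s).1 (u s).2 s) (Iic 0) :=
    (hGc.comp_continuousOn hcurve).const_smul (1 / ε)
  have hslow := eq_expOp_add_integral_iff A (x := fun s => (u s).1) hf X₀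
  have hfast := eq_integral_Iic_expOp_iff (ε⁻¹ • B) (y := fun s => (u s).2) hg
    (integrableOn_Iic_of_norm_le_exp hδ (continuousOn_expOp_neg_apply _ hg)
      (norm_expOp_neg_apply_le hB' fun t ht => by
        rw [norm_smul, mul_assoc]
        exact mul_le_mul_of_nonneg_left (hGu t ht) (norm_nonneg _)))
    (tendsto_atBot_zero_of_norm_le_exp hδ
      (norm_expOp_neg_apply_le hB' fun t ht => (norm_snd_le (u t)).trans (hCu t ht)))
  have hfast_eq (t : ℝ) : (1 / ε) • ∫ s in Iic t, expOp B ((t - s) / ε) (G (u s).1 (u s).2 s) =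
      ∫ s in Iic t, expOp (ε⁻¹ • B) (t - s) ((1 / ε) • G (u s).1 (u s).2 s) := by
    simp only [map_smul, integral_smul, expOp_div]
  have hB'_apply (y : Euc m) : (1 / ε) • B y = (ε⁻¹ • B) y := by rw [one_div]; rfl
  beta_reduce at hslow hfast
  simp only [forall₂_and, hslow, hfast_eq, hfast, hB'_apply, and_assoc]

/-- A pair in `C⁻_λ` satisfies the Lyapunov–Perron fixed point equations iff it is
a (continuously differentiable) solution of the slow-fast system on `(-∞,0]` with `X(0) = X₀`. -/
theorem lyapunovPerron_fixedPoint_iff_solution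
    {n m : ℕ} (A : Euc n →L[ℝ] Euc n) (B : Euc m →L[ℝ] Euc m)
    (α β : ℝ) (hα : 0 ≤ α) (hβ : β < 0)
    (hA : ∀ t ≤ (0:ℝ), ∀ x : Euc n, ‖expOp A t x‖ ≤ Real.exp (α * t) * ‖x‖)
    (hB : ∀ t ≥ (0:ℝ), ∀ y : Euc m, ‖expOp B t y‖ ≤ Real.exp (β * t) * ‖y‖)
    (F : Euc n → Euc m → ℝ → Euc n) (G : Euc n → Euc m → ℝ → Euc m)
    (Lf Lg : NNReal)
    (hFc : Continuous fun p : Euc n × Euc m × ℝ => F p.1 p.2.1 p.2.2)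
    (hGc : Continuous fun p : Euc n × Euc m × ℝ => G p.1 p.2.1 p.2.2)
    (hFl : ∀ t : ℝ, LipschitzWith Lf fun p : Euc n × Euc m => F p.1 p.2 t)
    (hGl : ∀ t : ℝ, LipschitzWith Lg fun p : Euc n × Euc m => G p.1 p.2 t)
    (ε lam : ℝ) (hε : 0 < ε) (hε1 : ε ≤ 1)
    (hlam1 : β < ε * lam) (hlam2 : ε * lam < α)
    (hgap : (Lf : ℝ) / (α - lam) + (Lg : ℝ) / (ε * lam - β) < 1)
    (hFG0 : ∃ C : ℝ, ∀ t ≤ (0:ℝ),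
      Real.exp (-lam * t) * (‖F 0 0 t‖ + ‖G 0 0 t‖) ≤ C)
    (X₀ : Euc n) (u : ℝ → Euc n × Euc m) (hu : memCm lam u) :
    (∀ t ≤ (0:ℝ),
        (u t).1 = expOp A t X₀ + ∫ s in (0:ℝ)..t, expOp A (t - s) (F (u s).1 (u s).2 s) ∧
        (u t).2 = (1 / ε) • ∫ s in Set.Iic t, expOp B ((t - s) / ε) (G (u s).1 (u s).2 s)) ↔
      ((u 0).1 = X₀ ∧
        ∀ t ≤ (0:ℝ),
          HasDerivWithinAt (fun s => (u s).1)
            (A (u t).1 + F (u t).1 (u t).2 t) (Set.Iic 0) t ∧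
          HasDerivWithinAt (fun s => (u s).2)
            ((1 / ε) • B (u t).2 + (1 / ε) • G (u t).1 (u t).2 t) (Set.Iic 0) t) :=
  lyapunovPerron_fixedPoint_iff_solution_general A B β hB F G Lg hFc hGc hGl ε lam hε hlam1 hFG0 X₀
    u hu
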